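/- In a Hilbert plane, for every line a and every point A not on a, there exists at least one line through A that does not meet a. -/

import Mathlib

/-- A Hilbert plane: a model of Hilbert's axioms of incidence, betweenness and
congruence for plane geometry (congruence rendered via a real-valued segment
length and angle measure). -/
structure HilbertPlane where
  Point : Type
  Line : Type
  onLine : Point → Line → Prop
  btw : Point → Point → Point → Prop
  dist : Point → Point → ℝ
  angle : Point → Point → Point → ℝ
  line_exists : ∀ P Q : Point, P ≠ Q → ∃ l : Line, onLine P l ∧ onLine Q l
  line_unique : ∀ (P Q : Point) (l m : Line), P ≠ Q → onLine P l → onLine Q l →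
    onLine P m → onLine Q m → l = m
  line_two_points : ∀ l : Line, ∃ P Q : Point, P ≠ Q ∧ onLine P l ∧ onLine Q l
  exists_noncollinear : ∃ P Q R : Point,
    ∀ l : Line, ¬ (onLine P l ∧ onLine Q l ∧ onLine R l)
  btw_symm : ∀ A B C, btw A B C → btw C B A
  btw_ne : ∀ A B C, btw A B C → A ≠ B ∧ B ≠ C ∧ A ≠ C
  btw_collinear : ∀ A B C, btw A B C → ∃ l, onLine A l ∧ onLine B l ∧ onLine C l
  btw_extend : ∀ A B, A ≠ B → ∃ C, btw A B C
  btw_not_rotate : ∀ A B C, btw A B C → ¬ btw B A C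
  pasch : ∀ (A B C : Point) (l : Line),
    (∀ m : Line, ¬ (onLine A m ∧ onLine B m ∧ onLine C m)) →
    ¬ onLine A l → ¬ onLine B l → ¬ onLine C l →
    (∃ P, onLine P l ∧ btw A P B) →
    (∃ Q, onLine Q l ∧ btw A Q C) ∨ (∃ Q, onLine Q l ∧ btw B Q C)
  dist_pos : ∀ A B, A ≠ B → 0 < dist A B
  dist_self : ∀ A, dist A A = 0
  dist_symm : ∀ A B, dist A B = dist B A
  dist_btw_add : ∀ A B C, btw A B C → dist A B + dist B C = dist A C
  seg_construct : ∀ A B : Point, A ≠ B → ∀ r : ℝ, 0 < r →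
    ∃ C, (C = B ∨ btw A C B ∨ btw A B C) ∧ dist A C = r
  angle_symm : ∀ A B C, angle A B C = angle C B A
  angle_mem : ∀ A B C, A ≠ B → C ≠ B → angle A B C ∈ Set.Icc (0:ℝ) Real.pi
  angle_pos : ∀ A B C, (∀ l, ¬ (onLine A l ∧ onLine B l ∧ onLine C l)) →
    0 < angle A B C
  angle_straight : ∀ A B C, btw A B C → angle A B C = Real.pi
  angle_ray_invariant : ∀ A B C B' C' : Point,
    (B' = B ∨ btw A B' B ∨ btw A B B') →
    (C' = C ∨ btw A C' C ∨ btw A C C') →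
    angle B A C = angle B' A C'
  angle_add : ∀ A B C D : Point, A ≠ B → A ≠ C → A ≠ D →
    (∀ l : Line, onLine A l → onLine B l →
      ¬ onLine D l ∧ ¬ onLine C l ∧ ¬ ∃ Z, onLine Z l ∧ btw D Z C) →
    (∀ l : Line, onLine A l → onLine C l →
      ¬ onLine D l ∧ ¬ onLine B l ∧ ¬ ∃ Z, onLine Z l ∧ btw D Z B) →
    angle B A D + angle D A C = angle B A C
  angle_construct : ∀ θ : ℝ, 0 < θ → θ < Real.pi →
    ∀ (A B P : Point) (l : Line), A ≠ B → onLine A l → onLine B l → ¬ onLine P l →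
    ∃ C, ¬ onLine C l ∧ (¬ ∃ Z, onLine Z l ∧ btw C Z P) ∧ angle C A B = θ
  sas : ∀ A B C A' B' C' : Point,
    (∀ l, ¬ (onLine A l ∧ onLine B l ∧ onLine C l)) →
    (∀ l, ¬ (onLine A' l ∧ onLine B' l ∧ onLine C' l)) →
    dist A B = dist A' B' → dist A C = dist A' C' →
    angle B A C = angle B' A' C' →
    dist B C = dist B' C' ∧ angle A B C = angle A' B' C' ∧ angle A C B = angle A' C' B'

namespace HilbertPlane

variable (H : HilbertPlane)

/-- Three points are collinear. -/
def Collinear (A B C : H.Point) : Prop :=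
  ∃ l : H.Line, H.onLine A l ∧ H.onLine B l ∧ H.onLine C l

/-- `X` and `Y` lie (strictly) on the same side of the line `l`. -/
def SameSide (l : H.Line) (X Y : H.Point) : Prop :=
  ¬ H.onLine X l ∧ ¬ H.onLine Y l ∧ ¬ ∃ Z, H.onLine Z l ∧ H.btw X Z Y

/-- `X` and `Y` lie on opposite sides of the line `l`. -/
def OppSide (l : H.Line) (X Y : H.Point) : Prop :=
  ¬ H.onLine X l ∧ ¬ H.onLine Y l ∧ ∃ Z, H.onLine Z l ∧ H.btw X Z Y

/-- `X` lies on the ray from `A` through `B`. -/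
def OnRay (A B X : H.Point) : Prop :=
  X = B ∨ H.btw A X B ∨ H.btw A B X

/-- The ray from `A` through `B` meets the line `a`. -/
def RayMeets (A B : H.Point) (a : H.Line) : Prop :=
  ∃ X, H.OnRay A B X ∧ H.onLine X a

/-- Two lines meet. -/
def LinesMeet (a b : H.Line) : Prop := ∃ X, H.onLine X a ∧ H.onLine X b

/-- `Q` is the foot of the perpendicular from `P` to the line `a`. -/
def FootPerp (P Q : H.Point) (a : H.Line) : Prop :=
  H.onLine Q a ∧ ∀ R, H.onLine R a → R ≠ Q → H.angle P Q R = Real.pi / 2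

/-- `D` lies strictly inside the angle `∠ X P Y`. -/
def InsideAngle (P X Y D : H.Point) : Prop :=
  (∀ l, H.onLine P l → H.onLine X l → H.SameSide l D Y) ∧
  (∀ l, H.onLine P l → H.onLine Y l → H.SameSide l D X)

/-- Lobachevsky's axiom: through any point outside a line there are two rays, not
on one line, not meeting the line, such that every ray inside the angle they form
meets the line. -/
def Lobachevsky : Prop :=
  ∀ (a : H.Line) (A : H.Point), ¬ H.onLine A a →
    ∃ B C : H.Point, ¬ H.Collinear B A C ∧
      ¬ H.RayMeets A B a ∧ ¬ H.RayMeets A C a ∧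
      ∀ D, H.InsideAngle A B C D → H.RayMeets A D a

/-- The ray from `P` through `B` is a limiting parallel ray to the line `a`,
where `Q` is the foot of the perpendicular from `P` to `a`: it does not meet `a`,
but every ray from `P` strictly inside the angle `∠ B P Q` meets `a`. -/
def LimitingParallelRay (a : H.Line) (P Q B : H.Point) : Prop :=
  H.FootPerp P Q a ∧ ¬ H.RayMeets P B a ∧
    ∀ D, H.InsideAngle P B Q D → H.RayMeets P D a

/-- The Archimedean axiom for segments. -/
def ArchimedeanAx : Prop :=
  ∀ A B C D : H.Point, A ≠ B → ∃ n : ℕ, H.dist C D < n * H.dist A B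

end HilbertPlane

/-!
Take two points `P`, `Q` of `a`, the midpoint `M` of `AP` and the reflection `Q'` of `Q` in `M`.
By SAS, with the vertical angles at `M`, the line `AQ'` makes the same alternate angles with the
transversal `AP` as `a` does. If it met `a` in a point `X`, then, depending on the side of `AP`
on which `X` lies, one of these two equal angles would be an exterior angle of the triangle `AXP`
and the other a remote interior angle, against the exterior angle theorem (Euclid I.16, I.27).

The order-theoretic groundwork (trichotomy on a line, plane separation) is Hilbert's, from
Pasch's axiom; the additive distance turns most four-point betweenness lemmas into linear
arithmetic.
-/

namespace HilbertPlane

variable {H : HilbertPlane} {A B C D E F M P Q X Y Z : H.Point} {a g k l m t : H.Line}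

theorem btw.symm (h : H.btw A B C) : H.btw C B A := H.btw_symm A B C h

theorem btw.left_ne (h : H.btw A B C) : A ≠ B := (H.btw_ne A B C h).1

theorem btw.ne_right (h : H.btw A B C) : B ≠ C := (H.btw_ne A B C h).2.1

theorem btw.left_ne_right (h : H.btw A B C) : A ≠ C := (H.btw_ne A B C h).2.2

theorem btw.not_swap_left (h : H.btw A B C) : ¬ H.btw B A C := H.btw_not_rotate A B C h

theorem btw.not_swap_right (h : H.btw A B C) : ¬ H.btw A C B := fun h' =>
  h.symm.not_swap_left h'.symm

theorem eq_of_onLine_of_onLine (hlm : l ≠ m) (hXl : H.onLine X l) (hXm : H.onLine X m)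
    (hYl : H.onLine Y l) (hYm : H.onLine Y m) : X = Y :=
  by_contra fun hXY => hlm (H.line_unique X Y l m hXY hXl hYl hXm hYm)

theorem btw.onLine (h : H.btw A B C) (hA : H.onLine A l) (hC : H.onLine C l) :
    H.onLine B l := by
  obtain ⟨m, hAm, hBm, hCm⟩ := H.btw_collinear A B C h
  rwa [H.line_unique A C m l h.left_ne_right hAm hCm hA hC] at hBm

theorem btw.onLine_right (h : H.btw A B C) (hA : H.onLine A l) (hB : H.onLine B l) :
    H.onLine C l := by
  obtain ⟨m, hAm, hBm, hCm⟩ := H.btw_collinear A B C h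
  rwa [H.line_unique A B m l h.left_ne hAm hBm hA hB] at hCm

theorem btw.onLine_left (h : H.btw A B C) (hB : H.onLine B l) (hC : H.onLine C l) :
    H.onLine A l :=
  h.symm.onLine_right hC hB

theorem Collinear.swap_left (h : H.Collinear A B C) : H.Collinear B A C :=
  let ⟨l, hA, hB, hC⟩ := h; ⟨l, hB, hA, hC⟩

theorem Collinear.swap_right (h : H.Collinear A B C) : H.Collinear A C B :=
  let ⟨l, hA, hB, hC⟩ := h; ⟨l, hA, hC, hB⟩

theorem not_collinear_of_not_onLine (hAB : A ≠ B) (hA : H.onLine A l) (hB : H.onLine B l)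
    (hC : ¬ H.onLine C l) : ¬ H.Collinear A B C := fun ⟨m, hAm, hBm, hCm⟩ =>
  hC (H.line_unique A B m l hAB hAm hBm hA hB ▸ hCm)

theorem exists_not_onLine (l : H.Line) : ∃ D, ¬ H.onLine D l := by
  obtain ⟨P, Q, R, h⟩ := H.exists_noncollinear
  by_contra! hl
  exact h l ⟨hl P, hl Q, hl R⟩

theorem OppSide.symm (h : H.OppSide l X Y) : H.OppSide l Y X :=
  let ⟨hX, hY, Z, hZ, hXZY⟩ := h; ⟨hY, hX, Z, hZ, hXZY.symm⟩

theorem SameSide.symm (h : H.SameSide l X Y) : H.SameSide l Y X :=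
  ⟨h.2.1, h.1, fun ⟨Z, hZ, hYZX⟩ => h.2.2 ⟨Z, hZ, hYZX.symm⟩⟩

theorem OppSide.btw_of_onLine (h : H.OppSide l X Y) (hkl : k ≠ l) (hXk : H.onLine X k)
    (hYk : H.onLine Y k) (hPk : H.onLine P k) (hPl : H.onLine P l) : H.btw X P Y := by
  obtain ⟨-, -, Z, hZl, hXZY⟩ := h
  rwa [eq_of_onLine_of_onLine hkl (hXZY.onLine hXk hYk) hZl hPk hPl] at hXZY

theorem sameSide_of_not_btw (hX : ¬ H.onLine X l) (hY : ¬ H.onLine Y l) (hkl : k ≠ l)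
    (hXk : H.onLine X k) (hYk : H.onLine Y k) (hPk : H.onLine P k) (hPl : H.onLine P l)
    (hXPY : ¬ H.btw X P Y) : H.SameSide l X Y :=
  ⟨hX, hY, fun hXY => hXPY (OppSide.btw_of_onLine ⟨hX, hY, hXY⟩ hkl hXk hYk hPk hPl)⟩

theorem OppSide.oppSide_of_sameSide (hAB : H.OppSide l A B) (hAC : H.SameSide l A C)
    (hABC : ¬ H.Collinear A B C) : H.OppSide l B C := by
  rcases H.pasch A B C l (not_exists.mp hABC) hAB.1 hAB.2.1 hAC.2.1 hAB.2.2 with h | h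
  · exact absurd h hAC.2.2
  · exact ⟨hAB.2.1, hAC.2.1, h⟩

theorem oppSide_of_btw_of_not_btw (hAg : H.onLine A g) (hBg : H.onLine B g) (hCg : H.onLine C g)
    (hAB : A ≠ B) (hBC : B ≠ C) (hAC : A ≠ C) (hBAC : ¬ H.btw B A C) (hDg : ¬ H.onLine D g)
    (hBDE : H.btw B D E) (hAk : H.onLine A k) (hDk : H.onLine D k) : H.OppSide k E C := by
  have hkg : k ≠ g := fun e => hDg (e ▸ hDk)
  have hBk : ¬ H.onLine B k := fun h => hAB (eq_of_onLine_of_onLine hkg hAk hAg h hBg)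
  have hCk : ¬ H.onLine C k := fun h => hAC (eq_of_onLine_of_onLine hkg hAk hAg h hCg)
  have hEk : ¬ H.onLine E k := fun h => hBk (hBDE.onLine_left hDk h)
  have hEg : ¬ H.onLine E g := fun h => hDg (hBDE.onLine hBg h)
  have hkBE : H.OppSide k B E := ⟨hBk, hEk, D, hDk, hBDE⟩
  have hkBC : H.SameSide k B C := sameSide_of_not_btw hBk hCk hkg.symm hBg hCg hAg hAk hBAC
  exact hkBE.oppSide_of_sameSide hkBC fun h =>
    not_collinear_of_not_onLine hBC hBg hCg hEg h.swap_right

theorem btw_of_btw_of_btw_of_btw (hAg : H.onLine A g) (hBg : H.onLine B g)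
    (hCg : H.onLine C g) (hAB : A ≠ B) (hBC : B ≠ C) (hAC : A ≠ C) (hDg : ¬ H.onLine D g)
    (hBDE : H.btw B D E) (hEFC : H.btw E F C) (hADF : H.btw A D F) : H.btw A B C := by
  obtain ⟨n, hBn, hDn⟩ := H.line_exists B D hBDE.left_ne
  obtain ⟨e, hEe, hCe⟩ := H.line_exists E C hEFC.left_ne_right
  have hng : n ≠ g := fun h => hDg (h ▸ hDn)
  have hEn : H.onLine E n := hBDE.onLine_right hBn hDn
  have hFe : H.onLine F e := hEFC.onLine hEe hCe
  have hen : e ≠ n := fun h => hBC (eq_of_onLine_of_onLine hng hBn hBg (h ▸ hCe) hCg)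
  have heg : e ≠ g := fun h => hDg (hBDE.onLine hBg (h ▸ hEe))
  have hAn : ¬ H.onLine A n := fun h => hAB (eq_of_onLine_of_onLine hng h hAg hBn hBg)
  have hCn : ¬ H.onLine C n := fun h => hBC (eq_of_onLine_of_onLine hng hBn hBg h hCg)
  have hFn : ¬ H.onLine F n := fun h =>
    hEFC.left_ne (eq_of_onLine_of_onLine hen hEe hEn hFe h)
  have hFg : ¬ H.onLine F g := fun h => hEFC.ne_right (eq_of_onLine_of_onLine heg hFe h hCe hCg)
  have hFC : H.SameSide n F C :=
    sameSide_of_not_btw hFn hCn hen hFe hCe hEe hEn hEFC.not_swap_left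
  have hFAC : ¬ H.Collinear F A C :=
    fun h => not_collinear_of_not_onLine hAC hAg hCg hFg h.swap_left.swap_right
  have hFA : H.OppSide n F A := OppSide.symm ⟨hAn, hFn, D, hDn, hADF⟩
  exact (hFA.oppSide_of_sameSide hFC hFAC).btw_of_onLine hng.symm hAg hCg hBg hBn

/-- Hilbert's proof: with `D` off the line and `B − D − E`, Pasch is applied to the triangles
`BEC`, `BEA`, `AEF` and `AFC`, where `F` is the point where `AD` meets `EC`. -/
theorem btw_trichotomy (hAg : H.onLine A g) (hBg : H.onLine B g) (hCg : H.onLine C g)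
    (hAB : A ≠ B) (hBC : B ≠ C) (hAC : A ≠ C) :
    H.btw A B C ∨ H.btw B A C ∨ H.btw A C B := by
  by_cases hBAC : H.btw B A C
  · exact Or.inr (Or.inl hBAC)
  by_cases hACB : H.btw A C B
  · exact Or.inr (Or.inr hACB)
  left
  obtain ⟨D, hDg⟩ := exists_not_onLine g
  obtain ⟨E, hBDE⟩ := H.btw_extend B D fun e => hDg (e ▸ hBg)
  obtain ⟨k, hAk, hDk⟩ := H.line_exists A D fun e => hDg (e ▸ hAg)
  obtain ⟨k', hCk', hDk'⟩ := H.line_exists C D fun e => hDg (e ▸ hCg)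
  obtain ⟨hEk, -, F, hFk, hEFC⟩ :=
    oppSide_of_btw_of_not_btw hAg hBg hCg hAB hBC hAC hBAC hDg hBDE hAk hDk
  have hEA : H.OppSide k' E A :=
    oppSide_of_btw_of_not_btw hCg hBg hAg hBC.symm hAB.symm hAC.symm (fun h => hACB h.symm)
      hDg hBDE hCk' hDk'
  obtain ⟨e, hEe, hCe⟩ := H.line_exists E C hEFC.left_ne_right
  have hFe : H.onLine F e := hEFC.onLine hEe hCe
  have hk'g : k' ≠ g := fun h => hDg (h ▸ hDk')
  have hkk' : k ≠ k' := fun h => hAC (eq_of_onLine_of_onLine hk'g (h ▸ hAk) hAg hCk' hCg)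
  have hEk' : ¬ H.onLine E k' := fun h =>
    hBC (eq_of_onLine_of_onLine hk'g (hBDE.onLine_left hDk' h) hBg hCk' hCg)
  have heg : e ≠ g := fun h => hDg (hBDE.onLine hBg (h ▸ hEe))
  have hFD : F ≠ D := by
    rintro rfl
    exact heg (H.line_unique B C e g hBC (hBDE.onLine_left hFe hEe) hCe hBg hCg)
  have hFk' : ¬ H.onLine F k' := fun h => hFD (eq_of_onLine_of_onLine hkk' hFk h hDk hDk')
  have hEF : H.SameSide k' E F :=
    sameSide_of_not_btw hEk' hFk' (fun h => hEk' (h ▸ hEe)) hEe hFe hCe hCk' hEFC.not_swap_right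
  have hAF : A ≠ F := by
    rintro rfl
    exact hEFC.ne_right (eq_of_onLine_of_onLine heg hFe hAg hCe hCg)
  have hEAF : ¬ H.Collinear E A F :=
    fun h => not_collinear_of_not_onLine hAF hAk hFk hEk h.swap_left.swap_right
  have hADF := (hEA.oppSide_of_sameSide hEF hEAF).btw_of_onLine hkk' hAk hFk hDk hDk'
  exact btw_of_btw_of_btw_of_btw hAg hBg hCg hAB hBC hAC hDg hBDE hEFC hADF

theorem dist_add_cases (hAg : H.onLine A g) (hBg : H.onLine B g) (hCg : H.onLine C g)
    (hAB : A ≠ B) (hBC : B ≠ C) (hAC : A ≠ C) :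
    H.dist A B + H.dist B C = H.dist A C ∨ H.dist A B + H.dist A C = H.dist B C ∨
      H.dist A C + H.dist B C = H.dist A B := by
  rcases btw_trichotomy hAg hBg hCg hAB hBC hAC with h | h | h
  · exact Or.inl (H.dist_btw_add _ _ _ h)
  · have := H.dist_btw_add _ _ _ h
    rw [H.dist_symm B A] at this
    exact Or.inr (Or.inl this)
  · have := H.dist_btw_add _ _ _ h
    rw [H.dist_symm C B] at this
    exact Or.inr (Or.inr this)

theorem btw_of_dist_add (hAg : H.onLine A g) (hBg : H.onLine B g) (hCg : H.onLine C g)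
    (hAB : A ≠ B) (hBC : B ≠ C) (hAC : A ≠ C)
    (hd : H.dist A B + H.dist B C = H.dist A C) : H.btw A B C := by
  have := H.dist_pos A B hAB
  have := H.dist_pos B C hBC
  rcases btw_trichotomy hAg hBg hCg hAB hBC hAC with h | h | h
  · exact h
  · linarith [H.dist_btw_add _ _ _ h, H.dist_symm A B]
  · linarith [H.dist_btw_add _ _ _ h, H.dist_symm B C]

theorem btw.trans_right_left (h₁ : H.btw A B D) (h₂ : H.btw B C D) : H.btw A B C := by
  obtain ⟨g, hAg, hBg, hDg⟩ := H.btw_collinear A B D h₁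
  have hCg : H.onLine C g := h₂.onLine hBg hDg
  have hAC : A ≠ C := by
    rintro rfl
    exact h₁.not_swap_left h₂
  have := H.dist_pos A B h₁.left_ne
  have := H.dist_pos B C h₂.left_ne
  have := H.dist_pos C D h₂.ne_right
  have := H.dist_btw_add _ _ _ h₁
  have := H.dist_btw_add _ _ _ h₂
  refine btw_of_dist_add hAg hBg hCg h₁.left_ne h₂.left_ne hAC ?_
  rcases dist_add_cases hAg hBg hCg h₁.left_ne h₂.left_ne hAC with h | h | h <;>
    rcases dist_add_cases hAg hCg hDg hAC h₂.ne_right h₁.left_ne_right with h' | h' | h' <;>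
    linarith

theorem btw.trans_right (h₁ : H.btw A B D) (h₂ : H.btw B C D) : H.btw A C D := by
  have hABC := h₁.trans_right_left h₂
  obtain ⟨g, hAg, hBg, hDg⟩ := H.btw_collinear A B D h₁
  refine btw_of_dist_add hAg (h₂.onLine hBg hDg) hDg hABC.left_ne_right h₂.ne_right
    h₁.left_ne_right ?_
  linarith [H.dist_btw_add _ _ _ h₁, H.dist_btw_add _ _ _ h₂, H.dist_btw_add _ _ _ hABC]

theorem btw.trans_left (h₁ : H.btw A C D) (h₂ : H.btw A B C) : H.btw A B D :=
  (h₁.symm.trans_right h₂.symm).symm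

theorem ne_of_btw_of_btw {U V : H.Point} (hXYZ : ¬ H.Collinear X Y Z) (hXVY : H.btw X V Y)
    (hYUZ : H.btw Y U Z) : V ≠ U := by
  rintro rfl
  obtain ⟨l, hXl, hYl⟩ := H.line_exists X Y hXVY.left_ne_right
  obtain ⟨m, hYm, hZm⟩ := H.line_exists Y Z hYUZ.left_ne_right
  have hlm : l ≠ m := fun h => hXYZ ⟨m, h ▸ hXl, hYm, hZm⟩
  exact hXVY.ne_right (eq_of_onLine_of_onLine hlm (hXVY.onLine hXl hYl) (hYUZ.onLine hYm hZm)
    hYl hYm)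

/-- Otherwise Pasch for the triangle `VWB` and the line `FD` would put `D` between `W` and `B`. -/
theorem not_btw_of_btw_of_btw {U V W : H.Point} (hBFD : ¬ H.Collinear B F D)
    (hBl : ¬ H.onLine B l) (hVl : H.onLine V l) (hWl : H.onLine W l) (hBVF : H.btw B V F)
    (hBWD : H.btw B W D) (hFUD : H.btw F U D) : ¬ H.btw V U W := by
  intro hVUW
  obtain ⟨a, hBa, hFa⟩ := H.line_exists B F hBVF.left_ne_right
  obtain ⟨b, hBb, hDb⟩ := H.line_exists B D hBWD.left_ne_right
  obtain ⟨n, hFn, hDn⟩ := H.line_exists F D hFUD.left_ne_right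
  have han : a ≠ n := fun h => hBFD ⟨n, h ▸ hBa, hFn, hDn⟩
  have hbn : b ≠ n := fun h => hBFD ⟨n, h ▸ hBb, hFn, hDn⟩
  have hVa : H.onLine V a := hBVF.onLine hBa hFa
  have hWb : H.onLine W b := hBWD.onLine hBb hDb
  have hVn : ¬ H.onLine V n := fun h => hBVF.ne_right (eq_of_onLine_of_onLine han hVa h hFa hFn)
  have hWn : ¬ H.onLine W n := fun h => hBWD.ne_right (eq_of_onLine_of_onLine hbn hWb h hDb hDn)
  have hBn : ¬ H.onLine B n := fun h => hBFD ⟨n, h, hFn, hDn⟩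
  have hVB : H.SameSide n V B :=
    sameSide_of_not_btw hVn hBn han hVa hBa hFa hFn fun h => hBVF.not_swap_right h.symm
  have hVWB : ¬ H.Collinear V W B := not_collinear_of_not_onLine hVUW.left_ne_right hVl hWl hBl
  have hWDB := (OppSide.oppSide_of_sameSide ⟨hVn, hWn, _, hFUD.onLine hFn hDn, hVUW⟩ hVB
    hVWB).btw_of_onLine hbn hWb hBb hDb hDn
  exact hBWD.not_swap_right hWDB.symm

theorem sameSide_of_oppSide_of_oppSide (hBFD : ¬ H.Collinear B F D) (hF : H.OppSide l B F)
    (hD : H.OppSide l B D) : H.SameSide l F D := by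
  obtain ⟨hBl, hFl, V, hVl, hBVF⟩ := hF
  obtain ⟨-, hDl, W, hWl, hBWD⟩ := hD
  refine ⟨hFl, hDl, fun ⟨U, hUl, hFUD⟩ => ?_⟩
  have hVW : V ≠ W := ne_of_btw_of_btw (fun h => hBFD h.swap_left) hBVF.symm hBWD
  have hVU : V ≠ U := ne_of_btw_of_btw hBFD hBVF hFUD
  have hUW : U ≠ W := ne_of_btw_of_btw (fun h => hBFD h.swap_right.swap_left) hFUD hBWD.symm
  rcases btw_trichotomy hVl hUl hWl hVU hUW hVW with h | h | h
  · exact not_btw_of_btw_of_btw hBFD hBl hVl hWl hBVF hBWD hFUD h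
  · exact not_btw_of_btw_of_btw (fun h => hBFD h.swap_right.swap_left.swap_right) hDl hUl hWl
      hFUD.symm hBWD.symm hBVF.symm h
  · exact not_btw_of_btw_of_btw (fun h => hBFD h.swap_left) hFl hVl hUl hBVF.symm hFUD hBWD h

/-- Going around through a point `F` across `l` reduces the collinear case to two applications
of Pasch and the triangle case. -/
theorem SameSide.trans_of_collinear (h₁ : H.SameSide l X Y)
    (h₂ : H.SameSide l Y Z) (hXg : H.onLine X g) (hYg : H.onLine Y g) (hZg : H.onLine Z g)
    (hXY : X ≠ Y) (hYZ : Y ≠ Z) (hXZ : X ≠ Z) : H.SameSide l X Z := by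
  obtain ⟨P, Q, hPQ, hPl, hQl⟩ := H.line_two_points l
  obtain ⟨E, hEl, hEg⟩ : ∃ E, H.onLine E l ∧ ¬ H.onLine E g := by
    by_contra! h
    exact h₁.1 (H.line_unique P Q l g hPQ hPl hQl (h P hPl) (h Q hQl) ▸ hXg)
  obtain ⟨F, hXEF⟩ := H.btw_extend X E fun h => h₁.1 (h ▸ hEl)
  have hFl : ¬ H.onLine F l := fun h => h₁.1 (hXEF.onLine_left hEl h)
  have hFg : ¬ H.onLine F g := fun h => hEg (hXEF.onLine hXg h)
  have hXF : H.OppSide l X F := ⟨h₁.1, hFl, E, hEl, hXEF⟩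
  have hYF := hXF.oppSide_of_sameSide h₁ fun h =>
    not_collinear_of_not_onLine hXY hXg hYg hFg h.swap_right
  have hZF := hYF.symm.oppSide_of_sameSide h₂ fun h =>
    not_collinear_of_not_onLine hYZ hYg hZg hFg h.swap_right
  exact sameSide_of_oppSide_of_oppSide
    (fun h => not_collinear_of_not_onLine hXZ hXg hZg hFg h.swap_left.swap_right) hXF.symm
    hZF

theorem SameSide.trans (h₁ : H.SameSide l X Y) (h₂ : H.SameSide l Y Z) :
    H.SameSide l X Z := by
  by_cases hXY : X = Y
  · exact hXY ▸ h₂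
  by_cases hYZ : Y = Z
  · exact hYZ ▸ h₁
  by_cases hXZ : X = Z
  · exact hXZ ▸ ⟨h₁.1, h₁.1, fun ⟨_, _, hXUX⟩ => hXUX.left_ne_right rfl⟩
  by_cases hXYZ : H.Collinear X Y Z
  · obtain ⟨g, hXg, hYg, hZg⟩ := hXYZ
    exact h₁.trans_of_collinear h₂ hXg hYg hZg hXY hYZ hXZ
  refine ⟨h₁.1, h₂.2.1, fun hXZ' => ?_⟩
  have hZY := OppSide.oppSide_of_sameSide ⟨h₁.1, h₂.2.1, hXZ'⟩ h₁ fun h =>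
    hXYZ h.swap_right
  exact h₂.2.2 hZY.symm.2.2

theorem btw.trans_expand_right (h₁ : H.btw A B C) (h₂ : H.btw B C D) : H.btw A C D := by
  obtain ⟨g, hAg, hBg, hCg⟩ := H.btw_collinear A B C h₁
  have hDg : H.onLine D g := h₂.onLine_right hBg hCg
  have hAD : A ≠ D := by
    rintro rfl
    exact h₁.not_swap_right h₂.symm
  rcases btw_trichotomy hAg hCg hDg h₁.left_ne_right h₂.ne_right hAD with h | h | h
  · exact h
  · exact absurd (h.symm.trans_right h₁).symm h₂.not_swap_left
  · -- a line through `C` would separate `B` from `D` while leaving `B`, `A`, `D` on one side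
    obtain ⟨E, hEg⟩ := exists_not_onLine g
    obtain ⟨k, hCk, hEk⟩ := H.line_exists C E fun e => hEg (e ▸ hCg)
    have hkg : k ≠ g := fun e => hEg (e ▸ hEk)
    have hAk : ¬ H.onLine A k := fun hk =>
      h₁.left_ne_right (eq_of_onLine_of_onLine hkg hk hAg hCk hCg)
    have hBk : ¬ H.onLine B k := fun hk =>
      h₁.ne_right (eq_of_onLine_of_onLine hkg hk hBg hCk hCg)
    have hDk : ¬ H.onLine D k := fun hk =>
      h₂.ne_right (eq_of_onLine_of_onLine hkg hCk hCg hk hDg)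
    have hBA : H.SameSide k B A :=
      sameSide_of_not_btw hBk hAk hkg.symm hBg hAg hCg hCk h₁.symm.not_swap_left
    have hAD' : H.SameSide k A D :=
      sameSide_of_not_btw hAk hDk hkg.symm hAg hDg hCg hCk h.not_swap_right
    exact absurd ⟨C, hCk, h₂⟩ (hBA.trans hAD').2.2

theorem btw.trans_expand_left (h₁ : H.btw A B C) (h₂ : H.btw B C D) : H.btw A B D :=
  (h₁.trans_expand_right h₂).trans_left h₁

theorem onRay_self : H.OnRay A B B := Or.inl rfl

theorem btw.onRay_mid (h : H.btw A B C) : H.OnRay A C B := Or.inr (Or.inl h)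

theorem btw.onRay_right (h : H.btw A B C) : H.OnRay A B C := Or.inr (Or.inr h)

theorem OnRay.onLine (h : H.OnRay A B X) (hA : H.onLine A l) (hB : H.onLine B l) :
    H.onLine X l := by
  rcases h with rfl | h | h
  · exact hB
  · exact h.onLine hA hB
  · exact h.onLine_right hA hB

theorem OnRay.ne (h : H.OnRay A B X) (hAB : A ≠ B) : X ≠ A := by
  rcases h with rfl | h | h
  · exact hAB.symm
  · exact h.left_ne.symm
  · exact h.left_ne_right.symm

theorem btw.of_onRay {W : H.Point} (h : H.btw X M W) (hY : H.OnRay M W Y) : H.btw X M Y := by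
  rcases hY with rfl | hY | hY
  · exact h
  · exact h.trans_right_left hY
  · exact h.trans_expand_left hY

theorem exists_onRay_dist (hAB : A ≠ B) {r : ℝ} (hr : 0 < r) :
    ∃ C, H.OnRay A B C ∧ H.dist A C = r :=
  H.seg_construct A B hAB r hr

theorem exists_btw_dist (hXM : X ≠ M) {r : ℝ} (hr : 0 < r) :
    ∃ Y, H.btw X M Y ∧ H.dist M Y = r := by
  obtain ⟨W, hW⟩ := H.btw_extend X M hXM
  obtain ⟨Y, hY, hd⟩ := exists_onRay_dist hW.ne_right hr
  exact ⟨Y, hW.of_onRay hY, hd⟩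

theorem exists_midpoint (hAB : A ≠ B) : ∃ M, H.btw A M B ∧ H.dist A M = H.dist M B := by
  have hd := H.dist_pos A B hAB
  obtain ⟨M, hM, hAM⟩ := exists_onRay_dist hAB (r := H.dist A B / 2) (by linarith)
  rcases hM with rfl | h | h
  · linarith
  · exact ⟨M, h, by linarith [H.dist_btw_add _ _ _ h]⟩
  · linarith [H.dist_btw_add _ _ _ h, H.dist_pos B M h.ne_right]

theorem angle_eq_of_onRay (hB : H.OnRay A B B') (hC : H.OnRay A C C') :
    H.angle B A C = H.angle B' A C' :=
  H.angle_ray_invariant A B C B' C' hB hC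

theorem angle_lt_of_insideAngle (hAB : A ≠ B) (hAC : A ≠ C) (hD : H.InsideAngle A B C D) :
    H.angle B A D < H.angle B A C := by
  obtain ⟨l, hAl, hCl⟩ := H.line_exists A C hAC
  have hDl : ¬ H.onLine D l := (hD.2 l hAl hCl).1
  have hadd := H.angle_add A B C D hAB hAC (fun h => hDl (h ▸ hAl)) hD.1 hD.2
  have hpos := H.angle_pos D A C fun l ⟨hD, hA, hC⟩ =>
    not_collinear_of_not_onLine hAC hAl hCl hDl ⟨l, hA, hC, hD⟩
  linarith

theorem angle_eq_of_supplement {A' B' C' D' : H.Point} (hBAC : H.btw B A C)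
    (hBAC' : H.btw B' A' C') (hBAD : ¬ H.Collinear B A D) (hBAD' : ¬ H.Collinear B' A' D')
    (hAB : H.dist A B = H.dist A' B') (hAC : H.dist A C = H.dist A' C')
    (hAD : H.dist A D = H.dist A' D') (hDAB : H.angle D A B = H.angle D' A' B') :
    H.angle D A C = H.angle D' A' C' := by
  obtain ⟨g, hBg, hAg, hCg⟩ := H.btw_collinear B A C hBAC
  obtain ⟨g', hBg', hAg', hCg'⟩ := H.btw_collinear B' A' C' hBAC'
  have hDg : ¬ H.onLine D g := fun h => hBAD ⟨g, hBg, hAg, h⟩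
  have hDg' : ¬ H.onLine D' g' := fun h => hBAD' ⟨g', hBg', hAg', h⟩
  have ncol {X Y : H.Point} (hXY : X ≠ Y) (hX : H.onLine X g) (hY : H.onLine Y g) :
      ∀ l, ¬ (H.onLine X l ∧ H.onLine D l ∧ H.onLine Y l) := fun l ⟨hX', hD, hY'⟩ =>
    not_collinear_of_not_onLine hXY hX hY hDg ⟨l, hX', hY', hD⟩
  have ncol' {X Y : H.Point} (hXY : X ≠ Y) (hX : H.onLine X g') (hY : H.onLine Y g') :
      ∀ l, ¬ (H.onLine X l ∧ H.onLine D' l ∧ H.onLine Y l) := fun l ⟨hX', hD, hY'⟩ =>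
    not_collinear_of_not_onLine hXY hX hY hDg' ⟨l, hX', hY', hD⟩
  obtain ⟨hDB, -, hABD⟩ := H.sas A D B A' D' B' (ncol hBAC.left_ne.symm hAg hBg)
    (ncol' hBAC'.left_ne.symm hAg' hBg') hAD hAB hDAB
  have hDBC : H.angle D B C = H.angle D' B' C' := by
    rw [angle_eq_of_onRay onRay_self hBAC.onRay_mid, H.angle_symm D B A,
      angle_eq_of_onRay onRay_self hBAC'.onRay_mid, H.angle_symm D' B' A']
    exact hABD
  obtain ⟨hDC, -, hBCD⟩ := H.sas B D C B' D' C' (ncol hBAC.left_ne_right hBg hCg)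
    (ncol' hBAC'.left_ne_right hBg' hCg')
    (by rw [H.dist_symm, hDB, H.dist_symm])
    (by linarith [H.dist_btw_add _ _ _ hBAC, H.dist_btw_add _ _ _ hBAC', H.dist_symm B A,
      H.dist_symm B' A'])
    hDBC
  have hDCA : H.angle D C A = H.angle D' C' A' := by
    rw [← angle_eq_of_onRay onRay_self hBAC.symm.onRay_mid, H.angle_symm D C B,
      ← angle_eq_of_onRay onRay_self hBAC'.symm.onRay_mid, H.angle_symm D' C' B']
    exact hBCD
  obtain ⟨-, -, hCAD⟩ := H.sas C D A C' D' A' (ncol hBAC.ne_right.symm hCg hAg)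
    (ncol' hBAC'.ne_right.symm hCg' hAg') (by rw [H.dist_symm, hDC, H.dist_symm])
    (by rw [H.dist_symm, hAC, H.dist_symm]) hDCA
  rw [H.angle_symm, hCAD, H.angle_symm]

/-- `angle_eq_of_supplement` needs equal side lengths, so the four sides are first cut to unit
length; it is then applied to the angle `A₁MB₂` and the same angle read backwards, `B₂MA₁`,
whose supplements are the two vertical angles. -/
theorem angle_eq_of_vertical {A' B' : H.Point} (hAMA' : H.btw A M A') (hBMB' : H.btw B M B')
    (hAMB : ¬ H.Collinear A M B) : H.angle A M B = H.angle A' M B' := by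
  obtain ⟨A₁, hA₁, dA₁⟩ := exists_onRay_dist hAMA'.left_ne.symm one_pos
  obtain ⟨A₂, hA₂, dA₂⟩ := exists_onRay_dist hAMA'.ne_right one_pos
  obtain ⟨B₁, hB₁, dB₁⟩ := exists_onRay_dist hBMB'.left_ne.symm one_pos
  obtain ⟨B₂, hB₂, dB₂⟩ := exists_onRay_dist hBMB'.ne_right one_pos
  have hA₁MA₂ : H.btw A₁ M A₂ := (hAMA'.symm.of_onRay hA₁).symm.of_onRay hA₂
  have hB₂MB₁ : H.btw B₂ M B₁ := (hBMB'.of_onRay hB₂).symm.of_onRay hB₁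
  obtain ⟨a, hMa, hAa⟩ := H.line_exists M A hAMA'.left_ne.symm
  obtain ⟨b, hMb, hBb⟩ := H.line_exists M B hBMB'.left_ne.symm
  have hab : a ≠ b := fun h => hAMB ⟨b, h ▸ hAa, hMb, hBb⟩
  have hB₂b : H.onLine B₂ b := hB₂.onLine hMb (hBMB'.onLine_right hBb hMb)
  have hB₂a : ¬ H.onLine B₂ a := fun h =>
    hB₂.ne hBMB'.ne_right (eq_of_onLine_of_onLine hab h hB₂b hMa hMb)
  have hA₁MB₂ : ¬ H.Collinear A₁ M B₂ :=
    not_collinear_of_not_onLine (hA₁.ne hAMA'.left_ne.symm) (hA₁.onLine hMa hAa) hMa hB₂a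
  have h := angle_eq_of_supplement hA₁MA₂ hB₂MB₁ hA₁MB₂
    (fun h => hA₁MB₂ h.swap_left.swap_right.swap_left) (by rw [dA₁, dB₂]) (by rw [dA₂, dB₁])
    (by rw [dB₂, dA₁]) (H.angle_symm B₂ M A₁)
  rw [angle_eq_of_onRay hA₁ hB₁, angle_eq_of_onRay hA₂ hB₂, H.angle_symm A₂ M B₂]
  exact h.symm

theorem angle_eq_of_point_reflection {Q' : H.Point} (hAMP : H.btw A M P)
    (hAM : H.dist A M = H.dist M P) (hQMQ' : H.btw Q M Q') (hMQ : H.dist M Q = H.dist M Q')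
    (hAPQ : ¬ H.Collinear A P Q) : H.angle A P Q = H.angle P A Q' := by
  obtain ⟨t, hAt, hPt⟩ := H.line_exists A P hAMP.left_ne_right
  have hMt : H.onLine M t := hAMP.onLine hAt hPt
  have hQt : ¬ H.onLine Q t := fun h => hAPQ ⟨t, hAt, hPt, h⟩
  have hQ't : ¬ H.onLine Q' t := fun h => hQt (hQMQ'.onLine_left hMt h)
  have hvert : H.angle P M Q = H.angle A M Q' := angle_eq_of_vertical hAMP.symm hQMQ'
    (not_collinear_of_not_onLine hAMP.ne_right.symm hPt hMt hQt)
  obtain ⟨-, hMPQ, -⟩ := H.sas M P Q M A Q'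
    (fun l ⟨hM, hP, hQ⟩ =>
      not_collinear_of_not_onLine hAMP.ne_right hMt hPt hQt ⟨l, hM, hP, hQ⟩)
    (fun l ⟨hM, hA, hQ'⟩ =>
      not_collinear_of_not_onLine hAMP.left_ne.symm hMt hAt hQ't ⟨l, hM, hA, hQ'⟩)
    (by rw [H.dist_symm M A, hAM]) hMQ hvert
  calc H.angle A P Q = H.angle M P Q := angle_eq_of_onRay hAMP.symm.onRay_mid onRay_self
    _ = H.angle M A Q' := hMPQ
    _ = H.angle P A Q' := (angle_eq_of_onRay hAMP.onRay_mid onRay_self).symm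

theorem insideAngle_of_btw (hABC : ¬ H.Collinear A B C) (hBCD : H.btw B C D)
    (hAEC : H.btw A E C) (hBEF : H.btw B E F) : H.InsideAngle C A D F := by
  obtain ⟨g, hBg, hCg⟩ := H.line_exists B C hBCD.left_ne
  have hDg : H.onLine D g := hBCD.onLine_right hBg hCg
  have hAg : ¬ H.onLine A g := fun h => hABC ⟨g, h, hBg, hCg⟩
  obtain ⟨k, hAk, hCk⟩ := H.line_exists A C hAEC.left_ne_right
  have hkg : k ≠ g := fun h => hAg (h ▸ hAk)
  have hBk : ¬ H.onLine B k := fun h => hBCD.left_ne (eq_of_onLine_of_onLine hkg h hBg hCk hCg)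
  have hDk : ¬ H.onLine D k := fun h => hBCD.ne_right (eq_of_onLine_of_onLine hkg hCk hCg h hDg)
  have hEk : H.onLine E k := hAEC.onLine hAk hCk
  have hEg : ¬ H.onLine E g := fun h => hAEC.ne_right (eq_of_onLine_of_onLine hkg hEk h hCk hCg)
  obtain ⟨n, hBn, hEn⟩ := H.line_exists B E hBEF.left_ne
  have hFn : H.onLine F n := hBEF.onLine_right hBn hEn
  have hng : n ≠ g := fun h => hEg (h ▸ hEn)
  have hnk : n ≠ k := fun h => hBk (h ▸ hBn)
  have hFk : ¬ H.onLine F k := fun h => hBEF.ne_right (eq_of_onLine_of_onLine hnk hEn hEk hFn h)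
  have hFg : ¬ H.onLine F g := fun h =>
    hBEF.left_ne_right (eq_of_onLine_of_onLine hng hBn hBg hFn h)
  have hFD : H.SameSide k F D := sameSide_of_oppSide_of_oppSide
    (fun h => not_collinear_of_not_onLine hBCD.left_ne_right hBg hDg hFg h.swap_right)
    ⟨hBk, hFk, E, hEk, hBEF⟩ ⟨hBk, hDk, C, hCk, hBCD⟩
  have hAE : H.SameSide g A E := sameSide_of_not_btw hAg hEg hkg hAk hEk hCk hCg hAEC.not_swap_right
  have hEF : H.SameSide g E F := sameSide_of_not_btw hEg hFg hng hEn hFn hBn hBg hBEF.not_swap_left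
  exact ⟨fun l hCl hAl => H.line_unique C A l k hAEC.left_ne_right.symm hCl hAl hCk hAk ▸ hFD,
    fun l hCl hDl => H.line_unique C D l g hBCD.ne_right hCl hDl hCg hDg ▸ (hAE.trans hEF).symm⟩

/-- Euclid I.16: with `E` the midpoint of `AC` and `F` the reflection of `B` in `E`, the angle
`ACF` equals `BAC` and lies inside the exterior angle `ACD`. -/
theorem angle_lt_exterior (hABC : ¬ H.Collinear A B C) (hBCD : H.btw B C D) :
    H.angle B A C < H.angle A C D := by
  have hAC : A ≠ C := by
    rintro rfl
    obtain ⟨g, hBg, hAg⟩ := H.line_exists B A hBCD.left_ne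
    exact hABC ⟨g, hAg, hBg, hAg⟩
  obtain ⟨E, hAEC, hAE⟩ := exists_midpoint hAC
  have hBE : B ≠ E := by
    rintro rfl
    exact hABC (H.btw_collinear A B C hAEC)
  obtain ⟨F, hBEF, hEF⟩ := exists_btw_dist hBE (H.dist_pos E B hBE.symm)
  have hCAB : H.angle C A B = H.angle A C F := angle_eq_of_point_reflection hAEC.symm
    (by rw [H.dist_symm C E, H.dist_symm E A, hAE]) hBEF hEF.symm
    (fun h => hABC h.swap_left.swap_right)
  calc H.angle B A C = H.angle C A B := H.angle_symm B A C
    _ = H.angle A C F := hCAB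
    _ < H.angle A C D :=
      angle_lt_of_insideAngle hAC.symm hBCD.ne_right (insideAngle_of_btw hABC hBCD hAEC hBEF)

theorem false_of_alternate_angles_of_oppSide {Q' : H.Point}
    (hAa : ¬ H.onLine A a) (hAt : H.onLine A t) (hPt : H.onLine P t) (hAm : H.onLine A m)
    (hPa : H.onLine P a) (hQa : H.onLine Q a) (hQ'm : H.onLine Q' m)
    (hQQ' : H.OppSide t Q Q') (hang : H.angle A P Q = H.angle P A Q')
    (hXm : H.onLine X m) (hXa : H.onLine X a) (hXQ : H.OppSide t X Q) : False := by
  have hat : a ≠ t := fun h => hQQ'.1 (h ▸ hQa)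
  have hma : m ≠ a := fun h => hAa (h ▸ hAm)
  have hXPQ : H.btw X P Q := hXQ.btw_of_onLine hat hXa hQa hPa hPt
  have hXA : X ≠ A := fun h => hAa (h ▸ hXa)
  have hAQ' : A ≠ Q' := fun h => hQQ'.2.1 (h ▸ hAt)
  have hray : H.OnRay A Q' X := by
    by_cases hXQ' : X = Q'
    · exact Or.inl hXQ'
    rcases btw_trichotomy hXm hAm hQ'm hXA hAQ' hXQ' with h | h | h
    · have hXQQ' : ¬ H.Collinear X Q Q' := fun ⟨l, hX, hQ, hQ'⟩ => by
        rw [H.line_unique X Q l a hXPQ.left_ne_right hX hQ hXa hQa] at hQ'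
        exact hXQ' (eq_of_onLine_of_onLine hma hXm hXa hQ'm hQ')
      exact absurd hQQ'.2.2
        (sameSide_of_oppSide_of_oppSide hXQQ' hXQ ⟨hXQ.1, hQQ'.2.1, A, hAt, h⟩).2.2
    · exact h.onRay_mid
    · exact h.symm.onRay_right
  have hAXP : ¬ H.Collinear A X P := fun h =>
    not_collinear_of_not_onLine hXPQ.left_ne hXa hPa hAa h.swap_left.swap_right
  have hXAP : H.angle X A P = H.angle A P Q := by
    rw [← angle_eq_of_onRay hray onRay_self, H.angle_symm, hang]
  exact (angle_lt_exterior hAXP hXPQ).ne hXAP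

theorem not_linesMeet_of_alternate_angles {Q' : H.Point}
    (hAa : ¬ H.onLine A a) (hAt : H.onLine A t) (hPt : H.onLine P t) (hAm : H.onLine A m)
    (hPa : H.onLine P a) (hQa : H.onLine Q a) (hQ'm : H.onLine Q' m)
    (hQQ' : H.OppSide t Q Q') (hang : H.angle A P Q = H.angle P A Q') : ¬ H.LinesMeet m a := by
  rintro ⟨X, hXm, hXa⟩
  have hAP : A ≠ P := fun h => hAa (h ▸ hPa)
  have hPm : ¬ H.onLine P m := fun h => hQQ'.2.1 (H.line_unique A P m t hAP hAm h hAt hPt ▸ hQ'm)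
  have hat : a ≠ t := fun h => hQQ'.1 (h ▸ hQa)
  have hXt : ¬ H.onLine X t := fun h => hPm (eq_of_onLine_of_onLine hat hXa h hPa hPt ▸ hXm)
  by_cases hXQ : H.SameSide t X Q
  · have hXQ' : H.OppSide t X Q' :=
      ⟨hXt, hQQ'.2.1, by_contra fun h => (hXQ.symm.trans ⟨hXt, hQQ'.2.1, h⟩).2.2 hQQ'.2.2⟩
    exact false_of_alternate_angles_of_oppSide hPm hPt hAt hPa hAm hQ'm hQa hQQ'.symm hang.symm
      hXa hXm hXQ'
  · exact false_of_alternate_angles_of_oppSide hAa hAt hPt hAm hPa hQa hQ'm hQQ' hang hXm hXa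
      ⟨hXt, hQQ'.1, by_contra fun h => hXQ ⟨hXt, hQQ'.1, h⟩⟩

end HilbertPlane

open HilbertPlane

/-- In a Hilbert plane, for every line `a` and point `A` not on `a` there is at
least one line through `A` not meeting `a` (existence of parallels in neutral
geometry, Euclid I.31). -/
theorem exists_parallel_neutral (H : HilbertPlane)
    (a : H.Line) (A : H.Point) (hA : ¬ H.onLine A a) :
    ∃ m : H.Line, H.onLine A m ∧ ¬ H.LinesMeet m a := by
  obtain ⟨P, Q, hPQ, hPa, hQa⟩ := H.line_two_points a
  have hAP : A ≠ P := fun h => hA (h ▸ hPa)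
  obtain ⟨t, hAt, hPt⟩ := H.line_exists A P hAP
  have hta : t ≠ a := fun h => hA (h ▸ hAt)
  have hQt : ¬ H.onLine Q t := fun h => hPQ (eq_of_onLine_of_onLine hta hPt hPa h hQa)
  obtain ⟨M, hAMP, hAM⟩ := exists_midpoint hAP
  have hMt : H.onLine M t := hAMP.onLine hAt hPt
  have hQM : Q ≠ M := fun h => hQt (h ▸ hMt)
  obtain ⟨Q', hQMQ', hMQ'⟩ := exists_btw_dist hQM (H.dist_pos M Q hQM.symm)
  have hQ't : ¬ H.onLine Q' t := fun h => hQt (hQMQ'.onLine_left hMt h)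
  obtain ⟨m, hAm, hQ'm⟩ := H.line_exists A Q' fun h => hQ't (h ▸ hAt)
  refine ⟨m, hAm, not_linesMeet_of_alternate_angles hA hAt hPt hAm hPa hQa hQ'm
    ⟨hQt, hQ't, M, hMt, hQMQ'⟩ ?_⟩
  exact angle_eq_of_point_reflection hAMP hAM hQMQ' hMQ'.symm fun ⟨l, hAl, hPl, hQl⟩ =>
    hQt (H.line_unique A P l t hAP hAl hPl hAt hPt ▸ hQl)
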